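/- Let f: ℝᴺ × ℝⁿ → ℝ be such that p ↦ f(p, x) is μ-strongly convex on the unit simplex Δ for each parameter x, and x ↦ f(p, x) is L-Lipschitz uniformly in p ∈ Δ. Let p*(x) = argmin_{p ∈ Δ} f(p, x). Then p* is Hölder continuous with exponent 1/2: ‖p*(x) - p*(y)‖ ≤ 2·√(L/μ)·√(‖x - y‖) for all x, y. -/

import Mathlib

/-!
Testing strong convexity of `f (·, x)` against its minimizer `p*(x)` along the segment to
any `q ∈ Δ` and letting the step go to `0` gives quadratic growth,
`μ / 2 * ‖q - p*(x)‖ ^ 2 ≤ f (q, x) - f (p*(x), x)`. Adding this at `x` (with `q = p*(y)`) and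
at `y` (with `q = p*(x)`) bounds `μ * ‖p*(x) - p*(y)‖ ^ 2` by how much `f (·, x)` and
`f (·, y)` differ at the two minimizers, which is at most `2 * L * ‖x - y‖`.
-/

open Filter Set Topology

section StrongConvexity

variable {E : Type*} [NormedAddCommGroup E] [NormedSpace ℝ E] {s : Set E} {m : ℝ}

lemma StrongConvexOn.of_forall_mem_Icc {f : E → ℝ} (hs : Convex ℝ s)
    (h : ∀ p ∈ s, ∀ q ∈ s, ∀ t ∈ Icc (0 : ℝ) 1,
      f (t • q + (1 - t) • p) ≤ t * f q + (1 - t) * f p - m / 2 * (t * (1 - t)) * ‖p - q‖ ^ 2) :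
    StrongConvexOn s m f := by
  refine ⟨hs, fun x hx y hy a b ha hb hab => ?_⟩
  obtain rfl : b = 1 - a := by linarith
  have := h y hy x hx a ⟨ha, by linarith⟩
  rw [norm_sub_rev] at this
  simp only [smul_eq_mul]
  linarith

lemma StrongConvexOn.mul_sq_norm_sub_le_of_isMinOn {f : E → ℝ} {p q : E}
    (hf : StrongConvexOn s m f) (hmin : IsMinOn f s p) (hp : p ∈ s) (hq : q ∈ s) :
    m / 2 * ‖q - p‖ ^ 2 ≤ f q - f p := by
  have hstep : ∀ t ∈ Ioo (0 : ℝ) 1, (1 - t) * (m / 2 * ‖q - p‖ ^ 2) ≤ f q - f p := by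
    rintro t ⟨ht₀, ht₁⟩
    have hcomb := hf.2 hq hp ht₀.le (sub_nonneg.2 ht₁.le) (add_sub_cancel t 1)
    have hle : f p ≤ f (t • q + (1 - t) • p) :=
      hmin (hf.1 hq hp ht₀.le (sub_nonneg.2 ht₁.le) (add_sub_cancel t 1))
    simp only [smul_eq_mul] at hcomb
    refine le_of_mul_le_mul_left ?_ ht₀
    linarith
  have hlim : Tendsto (fun t : ℝ => (1 - t) * (m / 2 * ‖q - p‖ ^ 2)) (𝓝[>] 0)
      (𝓝 (m / 2 * ‖q - p‖ ^ 2)) := by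
    have hcont : Continuous fun t : ℝ => (1 - t) * (m / 2 * ‖q - p‖ ^ 2) := by fun_prop
    simpa using (hcont.tendsto 0).mono_left nhdsWithin_le_nhds
  exact le_of_tendsto hlim (by filter_upwards [Ioo_mem_nhdsGT one_pos] using hstep)

lemma StrongConvexOn.mul_sq_norm_sub_le_of_isMinOn_of_abs_sub_le {f₁ f₂ : E → ℝ} {p₁ p₂ : E}
    {δ : ℝ} (hf₁ : StrongConvexOn s m f₁) (hf₂ : StrongConvexOn s m f₂)
    (hmin₁ : IsMinOn f₁ s p₁) (hmin₂ : IsMinOn f₂ s p₂) (hp₁ : p₁ ∈ s) (hp₂ : p₂ ∈ s)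
    (hδ : ∀ p ∈ s, |f₁ p - f₂ p| ≤ δ) :
    m * ‖p₁ - p₂‖ ^ 2 ≤ 2 * δ := by
  have h₁ := hf₁.mul_sq_norm_sub_le_of_isMinOn hmin₁ hp₁ hp₂
  have h₂ := hf₂.mul_sq_norm_sub_le_of_isMinOn hmin₂ hp₂ hp₁
  rw [norm_sub_rev] at h₁
  linarith [(abs_le.1 (hδ p₁ hp₁)).1, (abs_le.1 (hδ p₂ hp₂)).2]

end StrongConvexity

lemma convex_euclideanSpace_stdSimplex (N : ℕ) :
    Convex ℝ {p : EuclideanSpace ℝ (Fin N) | (∀ i, 0 ≤ p i) ∧ ∑ i, p i = 1} :=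
  (convex_stdSimplex ℝ (Fin N)).linear_preimage (WithLp.linearEquiv 2 ℝ (Fin N → ℝ)).toLinearMap

theorem argmin_holder_half_general {N n : ℕ}
    (f : EuclideanSpace ℝ (Fin N) → EuclideanSpace ℝ (Fin n) → ℝ)
    (μ L : ℝ) (hμ : 0 < μ)
    (Δ : Set (EuclideanSpace ℝ (Fin N)))
    (hΔ : Δ = {p : EuclideanSpace ℝ (Fin N) | (∀ i, 0 ≤ p i) ∧ ∑ i, p i = 1})
    (hsc : ∀ x, ∀ p ∈ Δ, ∀ q ∈ Δ, ∀ t ∈ Set.Icc (0 : ℝ) 1,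
      f (t • q + (1 - t) • p) x ≤
        t * f q x + (1 - t) * f p x - μ / 2 * (t * (1 - t)) * ‖p - q‖ ^ 2)
    (hLip : ∀ p ∈ Δ, ∀ x y, |f p x - f p y| ≤ L * ‖x - y‖)
    (pstar : EuclideanSpace ℝ (Fin n) → EuclideanSpace ℝ (Fin N))
    (hmem : ∀ x, pstar x ∈ Δ)
    (hmin : ∀ x, IsMinOn (fun p => f p x) Δ (pstar x)) :
    ∀ x y, ‖pstar x - pstar y‖ ≤ 2 * Real.sqrt (L / μ) * Real.sqrt ‖x - y‖ := by
  intro x y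
  have hconv : Convex ℝ Δ := hΔ ▸ convex_euclideanSpace_stdSimplex N
  have hstrong : ∀ x, StrongConvexOn Δ μ (f · x) :=
    fun x => .of_forall_mem_Icc hconv (hsc x)
  have hsq : ‖pstar x - pstar y‖ ^ 2 ≤ 2 * (L / μ) * ‖x - y‖ := by
    have := (hstrong x).mul_sq_norm_sub_le_of_isMinOn_of_abs_sub_le (hstrong y)
      (hmin x) (hmin y) (hmem x) (hmem y) (fun p hp => hLip p hp x y)
    rw [show 2 * (L / μ) * ‖x - y‖ = 2 * (L * ‖x - y‖) / μ by ring, le_div_iff₀ hμ]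
    linarith
  calc ‖pstar x - pstar y‖ = Real.sqrt (‖pstar x - pstar y‖ ^ 2) :=
        (Real.sqrt_sq (norm_nonneg _)).symm
    _ ≤ Real.sqrt (2 * (L / μ) * ‖x - y‖) := Real.sqrt_le_sqrt hsq
    _ = Real.sqrt 2 * Real.sqrt (L / μ) * Real.sqrt ‖x - y‖ := by
        rw [Real.sqrt_mul' _ (norm_nonneg _), Real.sqrt_mul zero_le_two]
    _ ≤ 2 * Real.sqrt (L / μ) * Real.sqrt ‖x - y‖ := by
        gcongr
        exact Real.sqrt_le_iff.2 ⟨zero_le_two, by norm_num⟩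

/-- If `p ↦ f(p,x)` is `μ`-strongly convex on the unit simplex `Δ` and
`x ↦ f(p,x)` is `L`-Lipschitz uniformly in `p ∈ Δ`, then the minimizer map
`p*(x) = argmin_{p ∈ Δ} f(p,x)` is `1/2`-Hölder:
`‖p*(x) - p*(y)‖ ≤ 2√(L/μ)·√‖x - y‖`. -/
theorem argmin_holder_half {N n : ℕ}
    (f : EuclideanSpace ℝ (Fin N) → EuclideanSpace ℝ (Fin n) → ℝ)
    (μ L : ℝ) (hμ : 0 < μ) (hL : 0 ≤ L)
    (Δ : Set (EuclideanSpace ℝ (Fin N)))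
    (hΔ : Δ = {p : EuclideanSpace ℝ (Fin N) | (∀ i, 0 ≤ p i) ∧ ∑ i, p i = 1})
    (hsc : ∀ x, ∀ p ∈ Δ, ∀ q ∈ Δ, ∀ t ∈ Set.Icc (0 : ℝ) 1,
      f (t • q + (1 - t) • p) x ≤
        t * f q x + (1 - t) * f p x - μ / 2 * (t * (1 - t)) * ‖p - q‖ ^ 2)
    (hLip : ∀ p ∈ Δ, ∀ x y, |f p x - f p y| ≤ L * ‖x - y‖)
    (pstar : EuclideanSpace ℝ (Fin n) → EuclideanSpace ℝ (Fin N))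
    (hmem : ∀ x, pstar x ∈ Δ)
    (hmin : ∀ x, IsMinOn (fun p => f p x) Δ (pstar x)) :
    ∀ x y, ‖pstar x - pstar y‖ ≤ 2 * Real.sqrt (L / μ) * Real.sqrt ‖x - y‖ :=
  argmin_holder_half_general f μ L hμ Δ hΔ hsc hLip pstar hmem hmin
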